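/- Let t = (t₁,t₂,t₃) ∈ ℕ³ with positive entries, t̂ = (t₁,t₂), and 𝔥(x,y) a nonzero quasi-homogeneous polynomial of type t̂ and degree r+|t̂|. Then the space 𝒬^t_k of three-dimensional quasi-homogeneous vector fields of type t and degree k decomposes as the direct sum 𝒞_k ⊕ 𝒟_k ⊕ ℱ_k ⊕ 𝒢_k, where 𝒞_k = {(X_g, 0) : g ∈ Δ_{k+|t̂|}, g(0,0,z)=0}, 𝒟_k = {(μD₀, 0) : μ ∈ 𝒫^t_k}, ℱ_k = {(λX_𝔥, 0) : λ ∈ 𝒫^t_{k−r}}, 𝒢_k = {(0,0,f) : f ∈ 𝒫^t_{k+t₃}}. -/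

import Mathlib

/-!
Wedging a planar field with `D₀ = (t₁x, t₂y)` kills the `𝒟`-component and sends `X_g` to
`E g = t₁x ∂ₓg + t₂y ∂ᵧg`, the Euler operator of the weights `(t₁, t₂, 0)`. On a monomial `E`
multiplies by `t₁a + t₂b`, so it is invertible on the ideal `(x, y)` of polynomials vanishing on
the `z`-axis. Since `E 𝔥 = c 𝔥` with `c = r + |t̂|`, Leibniz gives `E (g + q𝔥) = E g + λ E 𝔥` for
`λ = q + E q / c`. Hence `P ∧ D₀ = E G` for a unique `G ∈ (x, y)`; splitting `G = g + q𝔥` along `Δ`,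
the field `P - (X_g + λX_𝔥, P₃)` has zero wedge with `D₀`, and as `x, y` are coprime it equals
`μ D₀`. Conversely a splitting with multiplier `λ` yields `P ∧ D₀ = E (g + q𝔥)` for the `q` solving
`q + E q / c = λ`, so uniqueness in `Δ` recovers `g` and `q`, hence `λ` and `μ`.
-/

open MvPolynomial

def IsQH (t : Fin 3 → ℕ) (k : ℕ) (f : MvPolynomial (Fin 3) ℝ) : Prop :=
  ∀ (ε : ℝ) (x : Fin 3 → ℝ),
    eval (fun i => ε ^ t i * x i) f = ε ^ k * eval x f

def IsQHVF (t : Fin 3 → ℕ) (k : ℕ) (F : Fin 3 → MvPolynomial (Fin 3) ℝ) : Prop :=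
  ∀ j, IsQH t (k + t j) (F j)

/-- `(X_g, 0)`: the 3D vector field with planar Hamiltonian part `(−∂g/∂y, ∂g/∂x)`
and zero third component. -/
noncomputable def hamVF (g : MvPolynomial (Fin 3) ℝ) : Fin 3 → MvPolynomial (Fin 3) ℝ :=
  ![-(pderiv 1 g), pderiv 0 g, 0]

/-- `(D₀, 0) = (t₁x, t₂y, 0)`. -/
noncomputable def D0VF (t : Fin 3 → ℕ) : Fin 3 → MvPolynomial (Fin 3) ℝ :=
  ![C ((t 0 : ℝ)) * X 0, C ((t 1 : ℝ)) * X 1, 0]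

open Finsupp

namespace MvPolynomial

variable {σ R : Type*} [CommSemiring R]

lemma eval_aeval (x : σ → R) (g : σ → MvPolynomial σ R) (f : MvPolynomial σ R) :
    eval x (aeval g f) = eval (fun i => eval x (g i)) f := by
  rw [aeval_eq_bind₁]; exact eval₂Hom_bind₁ _ _ _ _

lemma IsWeightedHomogeneous.eval_pow_mul [Fintype σ] {w : σ → ℕ} {m : ℕ} {f : MvPolynomial σ R}
    (hf : f.IsWeightedHomogeneous w m) (ε : R) (x : σ → R) :
    eval (fun i => ε ^ w i * x i) f = ε ^ m * eval x f := by
  induction hf using IsWeightedHomogeneous.induction_on with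
  | zero => simp
  | add p q _ _ hp hq => simp only [map_add, hp, hq, mul_add]
  | monomial d r hr =>
    rw [eval_monomial, eval_monomial, Finsupp.prod_pow, Finsupp.prod_pow]
    simp only [mul_pow, Finset.prod_mul_distrib, ← pow_mul, Finset.prod_pow_eq_pow_sum, ← hr,
      weight_eq_sum, smul_eq_mul, mul_comm (d _)]
    ring

lemma coeff_aeval_C_pow_mul_X [Fintype σ] {K : Type*} [Field K] [Infinite K] (w : σ → ℕ) (ε : K)
    (f : MvPolynomial σ K) (d : σ →₀ ℕ) :
    coeff d (aeval (fun i => C (ε ^ w i) * X i) f) = ε ^ weight w d * coeff d f := by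
  classical
  induction f using induction_on' with
  | add p q hp hq => rw [map_add, coeff_add, coeff_add, hp, hq, mul_add]
  | monomial u a =>
    have : aeval (fun i => C (ε ^ w i) * X i) (monomial u a) =
        C (ε ^ weight w u) * monomial u a := by
      refine funext fun x => ?_
      rw [eval_aeval, eval_mul, eval_C]
      simpa using (isWeightedHomogeneous_monomial w u a rfl).eval_pow_mul ε x
    rw [this, coeff_C_mul, coeff_monomial]
    split_ifs with h <;> simp [h]

noncomputable def coeffMul (φ : (σ →₀ ℕ) → R) (f : MvPolynomial σ R) : MvPolynomial σ R :=
  ∑ d ∈ f.support, monomial d (φ d * coeff d f)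

@[simp]
lemma coeff_coeffMul (φ : (σ →₀ ℕ) → R) (f : MvPolynomial σ R) (d : σ →₀ ℕ) :
    coeff d (coeffMul φ f) = φ d * coeff d f := by
  classical
  rw [coeffMul, coeff_sum, Finset.sum_eq_single d]
  · simp
  · intro b _ hb; simp [coeff_monomial, hb]
  · intro hd; simp [notMem_support_iff.1 hd]

lemma support_coeffMul_subset (φ : (σ →₀ ℕ) → R) (f : MvPolynomial σ R) :
    (coeffMul φ f).support ⊆ f.support := by
  intro d
  simp only [mem_support_iff, coeff_coeffMul]
  exact right_ne_zero_of_mul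

lemma IsWeightedHomogeneous.coeffMul {M : Type*} [AddCommMonoid M] {w : σ → M} {m : M}
    {f : MvPolynomial σ R} (hf : f.IsWeightedHomogeneous w m) (φ : (σ →₀ ℕ) → R) :
    (coeffMul φ f).IsWeightedHomogeneous w m := fun _ hd =>
  hf (mem_support_iff.1 (support_coeffMul_subset φ f (mem_support_iff.2 hd)))

lemma coeffMul_mem_span_X_image {s : Set σ} {f : MvPolynomial σ R}
    (hf : f ∈ Ideal.span (X '' s)) (φ : (σ →₀ ℕ) → R) : coeffMul φ f ∈ Ideal.span (X '' s) := by
  rw [mem_ideal_span_X_image] at hf ⊢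
  exact fun d hd => hf d (support_coeffMul_subset φ f hd)

lemma IsWeightedHomogeneous.of_mul_X {M : Type*} [AddCancelCommMonoid M] {w : σ → M} {m : M}
    {i : σ} {p : MvPolynomial σ R} (h : (p * X i).IsWeightedHomogeneous w (m + w i)) :
    p.IsWeightedHomogeneous w m := by
  intro d hd
  have := h (d := d + Finsupp.single i 1) (by rwa [coeff_mul_X])
  rw [map_add, weight_single, one_smul] at this
  exact add_right_cancel this

lemma exists_eq_X_mul_of_X_mul_eq_X_mul {R : Type*} [CommRing R] [IsDomain R] {i j : σ}
    (hij : i ≠ j) {p q : MvPolynomial σ R} (h : X i * q = X j * p) :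
    ∃ m, p = X i * m ∧ q = X j * m := by
  obtain ⟨m, rfl⟩ : X i ∣ p :=
    (X_prime.dvd_or_dvd ⟨q, h.symm⟩).resolve_left (by simpa using hij)
  refine ⟨m, rfl, mul_left_cancel₀ (X_ne_zero i) ?_⟩
  rw [h, mul_left_comm]

variable [Fintype σ]

noncomputable def euler (w : σ → ℕ) : MvPolynomial σ R →ₗ[R] MvPolynomial σ R :=
  ∑ i, w i • (LinearMap.mulLeft R (X i) ∘ₗ (pderiv i).toLinearMap)

lemma euler_apply (w : σ → ℕ) (f : MvPolynomial σ R) :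
    euler w f = ∑ i, w i • (X i * pderiv i f) := by
  simp [euler]

lemma euler_mul (w : σ → ℕ) (f g : MvPolynomial σ R) :
    euler w (f * g) = euler w f * g + f * euler w g := by
  simp only [euler_apply, pderiv_mul, Finset.sum_mul, Finset.mul_sum, ← Finset.sum_add_distrib]
  refine Finset.sum_congr rfl fun i _ => ?_
  simp only [smul_mul_assoc, mul_smul_comm, ← smul_add]
  ring_nf

lemma euler_monomial (w : σ → ℕ) (d : σ →₀ ℕ) (a : R) :
    euler w (monomial d a) = weight w d • monomial d a := by
  simp only [euler_apply, X_mul_pderiv_monomial, smul_smul, ← Finset.sum_smul, weight_eq_sum,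
    smul_eq_mul, mul_comm]

lemma coeff_euler (w : σ → ℕ) (f : MvPolynomial σ R) (d : σ →₀ ℕ) :
    coeff d (euler w f) = weight w d * coeff d f := by
  classical
  induction f using induction_on' with
  | add p q hp hq => rw [map_add, coeff_add, coeff_add, hp, hq, mul_add]
  | monomial u a =>
    rw [euler_monomial, coeff_smul, coeff_monomial, nsmul_eq_mul]
    split_ifs with h <;> simp [h]

lemma IsWeightedHomogeneous.euler {M : Type*} [AddCommMonoid M] {v : σ → M} {m : M}
    {f : MvPolynomial σ R} (hf : f.IsWeightedHomogeneous v m) (w : σ → ℕ) :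
    (euler w f).IsWeightedHomogeneous v m := fun d hd => by
  rw [coeff_euler] at hd
  exact hf (right_ne_zero_of_mul hd)

lemma mem_span_X_iff_weight_ne_zero {w : σ → ℕ} {f : MvPolynomial σ R} :
    f ∈ Ideal.span (X '' {i | w i ≠ 0}) ↔ ∀ d ∈ f.support, weight w d ≠ 0 := by
  simp only [mem_ideal_span_X_image, weight_eq_sum, ne_eq, Finset.sum_eq_zero_iff, Finset.mem_univ,
    true_implies, smul_eq_mul, mul_eq_zero, not_forall, not_or, Set.mem_ofPred_eq]
  exact forall₂_congr fun d _ => ⟨fun ⟨i, hw, hd⟩ => ⟨i, hd, hw⟩, fun ⟨i, hd, hw⟩ => ⟨i, hw, hd⟩⟩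

variable {K : Type*} [Field K] [CharZero K]

lemma mem_span_X_of_euler_eq_C_mul {w : σ → ℕ} {n : ℕ} (hn : n ≠ 0) {f : MvPolynomial σ K}
    (h : euler w f = C (n : K) * f) : f ∈ Ideal.span (X '' {i | w i ≠ 0}) := by
  refine mem_span_X_iff_weight_ne_zero.2 fun d hd => ?_
  have := congrArg (coeff d) h
  rw [coeff_euler, coeff_C_mul] at this
  have : weight w d = n := by exact_mod_cast mul_right_cancel₀ (mem_support_iff.1 hd) this
  rwa [this]

lemma euler_injOn (w : σ → ℕ) :
    Set.InjOn (euler w) ((Ideal.span (X '' {i | w i ≠ 0}) : Ideal (MvPolynomial σ K)) :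
      Set (MvPolynomial σ K)) := by
  intro f hf g hg hfg
  rw [← sub_eq_zero]
  ext d
  have hsub := mem_span_X_iff_weight_ne_zero.1 (sub_mem hf hg) d
  have := congrArg (coeff d) (by rw [map_sub, hfg, sub_self] : euler w (f - g) = 0)
  rw [coeff_euler, coeff_zero] at this
  by_contra hd
  exact mul_ne_zero (Nat.cast_ne_zero.2 (hsub (mem_support_iff.2 hd))) hd this

lemma exists_euler_eq {M : Type*} [AddCommMonoid M] {w : σ → ℕ} {v : σ → M} {m : M}
    {f : MvPolynomial σ K} (hf : f ∈ Ideal.span (X '' {i | w i ≠ 0}))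
    (hfv : f.IsWeightedHomogeneous v m) :
    ∃ g ∈ Ideal.span (X '' {i | w i ≠ 0}), g.IsWeightedHomogeneous v m ∧ euler w g = f := by
  refine ⟨coeffMul (fun d => (weight w d : K)⁻¹) f, coeffMul_mem_span_X_image hf _,
    hfv.coeffMul _, ?_⟩
  ext d
  rw [coeff_euler, coeff_coeffMul]
  by_cases hd : coeff d f = 0
  · simp [hd]
  · have : (weight w d : K) ≠ 0 :=
      Nat.cast_ne_zero.2 (mem_span_X_iff_weight_ne_zero.1 hf d (mem_support_iff.2 hd))
    field_simp

lemma exists_add_C_inv_mul_euler_eq {M : Type*} [AddCommMonoid M] (w : σ → ℕ) {v : σ → M}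
    {m : M} {n : ℕ} (hn : n ≠ 0) {f : MvPolynomial σ K} (hf : f.IsWeightedHomogeneous v m) :
    ∃ g, g.IsWeightedHomogeneous v m ∧ g + C (n : K)⁻¹ * euler w g = f := by
  refine ⟨coeffMul (fun d => (n : K) / (weight w d + n)) f, hf.coeffMul _, ?_⟩
  ext d
  have : (weight w d : K) + n ≠ 0 := by exact_mod_cast (by omega : weight w d + n ≠ 0)
  rw [coeff_add, coeff_C_mul, coeff_euler, coeff_coeffMul]
  field_simp
  ring

lemma euler_add_mul_eq (w : σ → ℕ) {n : ℕ} (hn : n ≠ 0) {h : MvPolynomial σ K}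
    (hE : euler w h = C (n : K) * h) (g q : MvPolynomial σ K) :
    euler w (g + q * h) = euler w g + (q + C (n : K)⁻¹ * euler w q) * euler w h := by
  have hinv : (C (n : K)⁻¹ * C (n : K) : MvPolynomial σ K) = 1 := by
    rw [← C_mul, inv_mul_cancel₀ (Nat.cast_ne_zero.2 hn), C_1]
  rw [map_add, euler_mul, hE]
  linear_combination (-(euler w q * h)) * hinv

end MvPolynomial

lemma isQH_iff {t : Fin 3 → ℕ} {k : ℕ} {f : MvPolynomial (Fin 3) ℝ} :
    IsQH t k f ↔ f.IsWeightedHomogeneous t k := by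
  refine ⟨fun h d hd => ?_, fun h ε x => h.eval_pow_mul ε x⟩
  have hscale : aeval (fun i => C ((2 : ℝ) ^ t i) * X i) f = C (2 ^ k) * f :=
    funext fun x => by rw [eval_aeval, eval_mul, eval_C]; simpa using h 2 x
  have := congrArg (coeff d) hscale
  rw [coeff_aeval_C_pow_mul_X, coeff_C_mul] at this
  exact pow_right_injective₀ two_pos (by norm_num) (mul_right_cancel₀ hd this)

noncomputable def zAxisIdeal : Ideal (MvPolynomial (Fin 3) ℝ) := Ideal.span (X '' {0, 1})

lemma X_mem_zAxisIdeal {i : Fin 3} (hi : i ∈ ({0, 1} : Set (Fin 3))) : X i ∈ zAxisIdeal :=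
  Ideal.subset_span ⟨i, hi, rfl⟩

lemma mem_zAxisIdeal_iff {f : MvPolynomial (Fin 3) ℝ} :
    f ∈ zAxisIdeal ↔ ∀ z : ℝ, eval ![0, 0, z] f = 0 := by
  constructor
  · intro hf z
    refine Ideal.span_le (I := RingHom.ker (eval ![0, 0, z])).2 ?_ hf
    rintro _ ⟨i, hi, rfl⟩
    simp only [Set.mem_insert_iff, Set.mem_singleton_iff] at hi
    rcases hi with rfl | rfl <;> simp
  · intro h
    set v : Fin 3 → MvPolynomial (Fin 3) ℝ := ![0, 0, X 2]
    have hv : aeval v f = 0 := funext fun x => by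
      have : (fun i => eval x (v i)) = ![0, 0, x 2] := by ext i; fin_cases i <;> simp [v]
      rw [eval_aeval, this, map_zero, h]
    -- substituting `x, y ↦ 0` is the identity modulo `(x, y)`, and it kills `f`
    have hmk : (Ideal.Quotient.mkₐ ℝ zAxisIdeal).comp (aeval v) =
        Ideal.Quotient.mkₐ ℝ zAxisIdeal := by
      refine algHom_ext fun i => ?_
      have h0 := Ideal.Quotient.eq_zero_iff_mem.2 (X_mem_zAxisIdeal (i := 0) (by simp))
      have h1 := Ideal.Quotient.eq_zero_iff_mem.2 (X_mem_zAxisIdeal (i := 1) (by simp))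
      fin_cases i <;> simp [v, h0, h1]
    have := congrArg (· f) hmk
    simp only [AlgHom.comp_apply, hv, map_zero, Ideal.Quotient.mkₐ_eq_mk] at this
    exact Ideal.Quotient.eq_zero_iff_mem.1 this.symm

def xyWeight (t : Fin 3 → ℕ) : Fin 3 → ℕ := ![t 0, t 1, 0]

lemma span_X_xyWeight {t : Fin 3 → ℕ} (h0 : t 0 ≠ 0) (h1 : t 1 ≠ 0) :
    Ideal.span (X '' {i | xyWeight t i ≠ 0}) = zAxisIdeal := by
  unfold zAxisIdeal
  congr 2
  ext i
  simp only [Set.mem_ofPred_eq, Set.mem_insert_iff, Set.mem_singleton_iff]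
  fin_cases i <;> simp [xyWeight, h0, h1]

lemma euler_xyWeight_eq {t : Fin 3 → ℕ} {n : ℕ} {h : MvPolynomial (Fin 3) ℝ}
    (hz : pderiv 2 h = 0) (hh : h.IsWeightedHomogeneous t n) :
    euler (xyWeight t) h = C (n : ℝ) * h := by
  rw [C_eq_coe_nat, ← nsmul_eq_mul, ← hh.sum_weight_X_mul_pderiv, euler_apply]
  simp [Fin.sum_univ_three, xyWeight, hz]

noncomputable def wedgeD0 (t : Fin 3 → ℕ) (F : Fin 3 → MvPolynomial (Fin 3) ℝ) :
    MvPolynomial (Fin 3) ℝ :=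
  D0VF t 0 * F 1 - D0VF t 1 * F 0

noncomputable def splitVF (t : Fin 3 → ℕ) (h g μ l f : MvPolynomial (Fin 3) ℝ) :
    Fin 3 → MvPolynomial (Fin 3) ℝ :=
  fun j => hamVF g j + μ * D0VF t j + l * hamVF h j + ![0, 0, f] j

lemma wedgeD0_mem_zAxisIdeal (t : Fin 3 → ℕ) (F : Fin 3 → MvPolynomial (Fin 3) ℝ) :
    wedgeD0 t F ∈ zAxisIdeal := by
  simp only [wedgeD0, D0VF, Matrix.cons_val_zero, Matrix.cons_val_one]
  exact sub_mem (Ideal.mul_mem_right _ _ (Ideal.mul_mem_left _ _ (X_mem_zAxisIdeal (by simp))))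
    (Ideal.mul_mem_right _ _ (Ideal.mul_mem_left _ _ (X_mem_zAxisIdeal (by simp))))

lemma isWeightedHomogeneous_wedgeD0 {t : Fin 3 → ℕ} {k : ℕ} {F : Fin 3 → MvPolynomial (Fin 3) ℝ}
    (hF : ∀ j, (F j).IsWeightedHomogeneous t (k + t j)) :
    (wedgeD0 t F).IsWeightedHomogeneous t (k + t 0 + t 1) := by
  have h0 := ((isWeightedHomogeneous_X ℝ t 0).C_mul (t 0 : ℝ)).mul (hF 1)
  have h1 := ((isWeightedHomogeneous_X ℝ t 1).C_mul (t 1 : ℝ)).mul (hF 0)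
  rw [show t 0 + (k + t 1) = k + t 0 + t 1 by ring] at h0
  rw [show t 1 + (k + t 0) = k + t 0 + t 1 by ring] at h1
  exact h0.sub h1

lemma wedgeD0_splitVF (t : Fin 3 → ℕ) (h g μ l f : MvPolynomial (Fin 3) ℝ) :
    wedgeD0 t (splitVF t h g μ l f) = euler (xyWeight t) g + l * euler (xyWeight t) h := by
  simp [wedgeD0, splitVF, hamVF, D0VF, euler_apply, Fin.sum_univ_three, xyWeight]
  ring

lemma exists_eq_mul_D0VF_of_wedgeD0_eq_zero {t : Fin 3 → ℕ} {k : ℕ} (h0 : t 0 ≠ 0)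
    (h1 : t 1 ≠ 0) {F : Fin 3 → MvPolynomial (Fin 3) ℝ} (hF : wedgeD0 t F = 0)
    (hF0 : (F 0).IsWeightedHomogeneous t (k + t 0)) :
    ∃ μ : MvPolynomial (Fin 3) ℝ, μ.IsWeightedHomogeneous t k ∧
      F 0 = μ * D0VF t 0 ∧ F 1 = μ * D0VF t 1 := by
  have h0' : (t 0 : ℝ) ≠ 0 := Nat.cast_ne_zero.2 h0
  have h1' : (t 1 : ℝ) ≠ 0 := Nat.cast_ne_zero.2 h1
  simp only [wedgeD0, D0VF, Matrix.cons_val_zero, Matrix.cons_val_one] at hF ⊢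
  obtain ⟨m, hm0, hm1⟩ := exists_eq_X_mul_of_X_mul_eq_X_mul (by decide : (0 : Fin 3) ≠ 1)
    (by linear_combination hF : X 0 * (C (t 0 : ℝ) * F 1) = X 1 * (C (t 1 : ℝ) * F 0))
  have hinv : (C ((t 0 : ℝ) * t 1)⁻¹ * C (t 0 : ℝ) * C (t 1 : ℝ) : MvPolynomial (Fin 3) ℝ) = 1 := by
    rw [← C_mul, ← C_mul, mul_assoc, inv_mul_cancel₀ (mul_ne_zero h0' h1'), C_1]
  have hm : m.IsWeightedHomogeneous t k := by
    refine IsWeightedHomogeneous.of_mul_X (i := 0) ?_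
    rw [mul_comm, ← hm0]
    exact hF0.C_mul _
  refine ⟨C ((t 0 : ℝ) * t 1)⁻¹ * m, hm.C_mul _, ?_, ?_⟩
  · linear_combination (C ((t 0 : ℝ) * t 1)⁻¹ * C (t 0 : ℝ)) * hm0 - F 0 * hinv
  · linear_combination (C ((t 0 : ℝ) * t 1)⁻¹ * C (t 1 : ℝ)) * hm1 - F 1 * hinv

lemma exists_eq_splitVF {t : Fin 3 → ℕ} {r k : ℕ} (h0 : t 0 ≠ 0) (h1 : t 1 ≠ 0) (hrk : r ≤ k)
    {h g q : MvPolynomial (Fin 3) ℝ} {P : Fin 3 → MvPolynomial (Fin 3) ℝ}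
    (hh : h.IsWeightedHomogeneous t (r + t 0 + t 1))
    (hhE : euler (xyWeight t) h = C ((r + t 0 + t 1 : ℕ) : ℝ) * h)
    (hP : ∀ j, (P j).IsWeightedHomogeneous t (k + t j))
    (hg : g.IsWeightedHomogeneous t (k + t 0 + t 1)) (hq : q.IsWeightedHomogeneous t (k - r))
    (hE : euler (xyWeight t) (g + q * h) = wedgeD0 t P) :
    ∃ μ, μ.IsWeightedHomogeneous t k ∧
      P = splitVF t h g μ (q + C ((r + t 0 + t 1 : ℕ) : ℝ)⁻¹ * euler (xyWeight t) q) (P 2) := by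
  set l := q + C ((r + t 0 + t 1 : ℕ) : ℝ)⁻¹ * euler (xyWeight t) q
  set F : Fin 3 → MvPolynomial (Fin 3) ℝ := fun j => P j - hamVF g j - l * hamVF h j
  have hF : wedgeD0 t F = 0 := by
    have : wedgeD0 t F = wedgeD0 t P - euler (xyWeight t) g - l * euler (xyWeight t) h := by
      simp [F, wedgeD0, hamVF, D0VF, euler_apply, Fin.sum_univ_three, xyWeight]
      ring
    rw [this, ← hE, euler_add_mul_eq _ (by omega) hhE]
    ring
  have hl : l.IsWeightedHomogeneous t (k - r) := hq.add ((hq.euler _).C_mul _)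
  have hF0 : (F 0).IsWeightedHomogeneous t (k + t 0) := by
    have hlh := hl.mul (hh.pderiv (n' := r + t 0) rfl)
    rw [show k - r + (r + t 0) = k + t 0 by omega] at hlh
    simpa [F, hamVF, sub_eq_add_neg] using ((hP 0).add (hg.pderiv rfl)).add hlh
  obtain ⟨μ, hμ, hμ0, hμ1⟩ := exists_eq_mul_D0VF_of_wedgeD0_eq_zero h0 h1 hF hF0
  refine ⟨μ, hμ, funext fun j => ?_⟩
  fin_cases j
  · simp [F, splitVF, hamVF] at hμ0 ⊢
    linear_combination hμ0
  · simp [F, splitVF, hamVF] at hμ1 ⊢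
    linear_combination hμ1
  · simp [splitVF, hamVF, D0VF]

lemma eq_and_eq_of_splitVF_eq {t : Fin 3 → ℕ} (h0 : t 0 ≠ 0)
    {h g μ μ' l f f' : MvPolynomial (Fin 3) ℝ}
    (H : splitVF t h g μ l f = splitVF t h g μ' l f') : μ = μ' ∧ f = f' := by
  have e0 := congrFun H 0
  have e2 := congrFun H 2
  simp [splitVF, hamVF, D0VF, h0, X_ne_zero] at e0 e2
  exact ⟨e0, e2⟩

theorem threeDim_splitting_general (t : Fin 3 → ℕ) (ht : ∀ i, 0 < t i) (r k : ℕ) (hrk : r ≤ k)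
    (𝔥 : MvPolynomial (Fin 3) ℝ) (h𝔥z : pderiv 2 𝔥 = 0)
    (h𝔥 : IsQH t (r + t 0 + t 1) 𝔥)
    (Δ : Submodule ℝ (MvPolynomial (Fin 3) ℝ))
    (hΔQH : ∀ g ∈ Δ, IsQH t (k + t 0 + t 1) g)
    (hΔcompl : ∀ p : MvPolynomial (Fin 3) ℝ, IsQH t (k + t 0 + t 1) p →
      ∃! gl : MvPolynomial (Fin 3) ℝ × MvPolynomial (Fin 3) ℝ,
        gl.1 ∈ Δ ∧ IsQH t (k - r) gl.2 ∧ p = gl.1 + gl.2 * 𝔥)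
    (P : Fin 3 → MvPolynomial (Fin 3) ℝ) (hP : IsQHVF t k P) :
    ∃! c : MvPolynomial (Fin 3) ℝ × MvPolynomial (Fin 3) ℝ ×
           MvPolynomial (Fin 3) ℝ × MvPolynomial (Fin 3) ℝ,
      c.1 ∈ Δ ∧ (∀ z : ℝ, eval ![0, 0, z] c.1 = 0) ∧
      IsQH t k c.2.1 ∧ IsQH t (k - r) c.2.2.1 ∧ IsQH t (k + t 2) c.2.2.2 ∧
      ∀ j, P j = hamVF c.1 j + c.2.1 * D0VF t j
          + c.2.2.1 * hamVF 𝔥 j + ![0, 0, c.2.2.2] j := by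
  simp only [IsQHVF, isQH_iff] at h𝔥 hΔQH hΔcompl hP ⊢
  have h0 : t 0 ≠ 0 := (ht 0).ne'
  have h1 : t 1 ≠ 0 := (ht 1).ne'
  have hn : r + t 0 + t 1 ≠ 0 := by omega
  have hJ := span_X_xyWeight h0 h1
  have h𝔥E := euler_xyWeight_eq h𝔥z h𝔥
  have h𝔥J : 𝔥 ∈ zAxisIdeal := hJ ▸ mem_span_X_of_euler_eq_C_mul hn h𝔥E
  obtain ⟨G, hGJ, hG, hEG⟩ :=
    exists_euler_eq (hJ ▸ wedgeD0_mem_zAxisIdeal t P) (isWeightedHomogeneous_wedgeD0 hP)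
  obtain ⟨⟨g, q⟩, ⟨hgΔ, hq, hGgq⟩, huniq⟩ := hΔcompl G hG
  dsimp only at hgΔ hq hGgq
  subst hGgq
  obtain ⟨μ, hμ, hPsplit⟩ := exists_eq_splitVF h0 h1 hrk h𝔥 h𝔥E hP (hΔQH g hgΔ) hq hEG
  refine ⟨(g, μ, _, P 2), ⟨hgΔ, mem_zAxisIdeal_iff.1 ?_, hμ, hq.add ((hq.euler _).C_mul _), hP 2,
    congrFun hPsplit⟩, ?_⟩
  · rw [← add_sub_cancel_right g (q * 𝔥)]
    exact sub_mem (hJ ▸ hGJ) (Ideal.mul_mem_left _ q h𝔥J)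
  rintro ⟨g', μ', l', f'⟩ ⟨hg'Δ, hg'J, -, hl', -, hP'⟩
  obtain ⟨q', hq', rfl⟩ := exists_add_C_inv_mul_euler_eq (xyWeight t) hn hl'
  have hG' : g' + q' * 𝔥 = g + q * 𝔥 := by
    refine euler_injOn _ (hJ ▸ add_mem (mem_zAxisIdeal_iff.2 hg'J) (Ideal.mul_mem_left _ q' h𝔥J))
      hGJ ?_
    rw [hEG, show P = splitVF t 𝔥 g' μ' _ f' from funext hP', wedgeD0_splitVF,
      euler_add_mul_eq _ hn h𝔥E]
  obtain ⟨rfl, rfl⟩ := Prod.mk.inj (huniq (g', q') ⟨hg'Δ, hq', hG'.symm⟩)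
  obtain ⟨rfl, rfl⟩ := eq_and_eq_of_splitVF_eq h0 (hPsplit.symm.trans (funext hP'))
  rfl

/-- The three-dimensional splitting `𝒬^t_k = 𝒞_k ⊕ 𝒟_k ⊕ ℱ_k ⊕ 𝒢_k`: every
3D quasi-homogeneous vector field of degree `k` decomposes uniquely as
`(X_g,0) + (μD₀,0) + (λX_𝔥,0) + (0,0,f)` with `g ∈ Δ`, `g(0,0,z) = 0`,
`μ ∈ 𝒫^t_k`, `λ ∈ 𝒫^t_{k−r}`, `f ∈ 𝒫^t_{k+t₃}`. -/
theorem threeDim_splitting (t : Fin 3 → ℕ) (ht : ∀ i, 0 < t i) (r k : ℕ) (hrk : r ≤ k)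
    (𝔥 : MvPolynomial (Fin 3) ℝ) (h𝔥z : pderiv 2 𝔥 = 0)
    (h𝔥 : IsQH t (r + t 0 + t 1) 𝔥) (h𝔥0 : 𝔥 ≠ 0)
    (Δ : Submodule ℝ (MvPolynomial (Fin 3) ℝ))
    (hΔQH : ∀ g ∈ Δ, IsQH t (k + t 0 + t 1) g)
    (hΔcompl : ∀ p : MvPolynomial (Fin 3) ℝ, IsQH t (k + t 0 + t 1) p →
      ∃! gl : MvPolynomial (Fin 3) ℝ × MvPolynomial (Fin 3) ℝ,
        gl.1 ∈ Δ ∧ IsQH t (k - r) gl.2 ∧ p = gl.1 + gl.2 * 𝔥)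
    (P : Fin 3 → MvPolynomial (Fin 3) ℝ) (hP : IsQHVF t k P) :
    ∃! c : MvPolynomial (Fin 3) ℝ × MvPolynomial (Fin 3) ℝ ×
           MvPolynomial (Fin 3) ℝ × MvPolynomial (Fin 3) ℝ,
      c.1 ∈ Δ ∧ (∀ z : ℝ, eval ![0, 0, z] c.1 = 0) ∧
      IsQH t k c.2.1 ∧ IsQH t (k - r) c.2.2.1 ∧ IsQH t (k + t 2) c.2.2.2 ∧
      ∀ j, P j = hamVF c.1 j + c.2.1 * D0VF t j
          + c.2.2.1 * hamVF 𝔥 j + ![0, 0, c.2.2.2] j :=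
  threeDim_splitting_general t ht r k hrk 𝔥 h𝔥z h𝔥 Δ hΔQH hΔcompl P hP
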